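/- arXiv:1207.3406 — 5 statements merged into one kernel-verified Lean document; each statement's English description precedes it below -/
import Mathlib

section
/- There exist real numbers a > 0 and b with 2π < b < 2π + π/2 such that b = e^a · sin(b) and a = e^a · cos(b) − 1. -/
open Real

theorem stmt0 :
    ∃ a b : ℝ, 0 < a ∧ 2 * π < b ∧ b < 2 * π + π / 2 ∧
      b = Real.exp a * Real.sin b ∧ a = Real.exp a * Real.cos b - 1 := by
  have pipos := Real.pi_pos
  have pi3 := Real.pi_gt_three
  have pi315 : π < 3.15 := by
    have := Real.pi_lt_d2
    norm_num at this ⊢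
    linarith
  set lo : ℝ := 2 * π + π / 4 with hlo
  set hi : ℝ := 2 * π + π / 2 with hhi
  have hlohi : lo ≤ hi := by rw [hlo, hhi]; linarith
  set g : ℝ → ℝ := fun b => Real.log (b / Real.sin b) + 1 - b * Real.cos b / Real.sin b
    with hg
  have hsinpos : ∀ b ∈ Set.Icc lo hi, 0 < Real.sin b := by
    intro b hb
    rw [← Real.sin_sub_two_pi b]
    apply Real.sin_pos_of_pos_of_lt_pi
    · have := hb.1; rw [hlo] at this; linarith
    · have := hb.2; rw [hhi] at this; linarith
  have hbpos : ∀ b ∈ Set.Icc lo hi, 0 < b := by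
    intro b hb
    have := hb.1; rw [hlo] at this; linarith
  have hcont : ContinuousOn g (Set.Icc lo hi) := by
    have hsne : ∀ b ∈ Set.Icc lo hi, Real.sin b ≠ 0 := fun b hb => (hsinpos b hb).ne'
    have h1 : ContinuousOn (fun b => b / Real.sin b) (Set.Icc lo hi) :=
      ContinuousOn.div continuousOn_id Real.continuous_sin.continuousOn hsne
    apply ContinuousOn.sub
    · exact (h1.log (fun b hb => (div_pos (hbpos b hb) (hsinpos b hb)).ne')).add
        continuousOn_const
    · exact ContinuousOn.div (continuousOn_id.mul Real.continuous_cos.continuousOn)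
        Real.continuous_sin.continuousOn hsne
  -- endpoint values
  have hsinhi : Real.sin hi = 1 := by
    rw [hhi, show 2 * π + π / 2 = π / 2 + 2 * π by ring, Real.sin_add_two_pi,
      Real.sin_pi_div_two]
  have hcoshi : Real.cos hi = 0 := by
    rw [hhi, show 2 * π + π / 2 = π / 2 + 2 * π by ring, Real.cos_add_two_pi,
      Real.cos_pi_div_two]
  have hsinlo : Real.sin lo = Real.sqrt 2 / 2 := by
    rw [hlo, show 2 * π + π / 4 = π / 4 + 2 * π by ring, Real.sin_add_two_pi,
      Real.sin_pi_div_four]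
  have hcoslo : Real.cos lo = Real.sqrt 2 / 2 := by
    rw [hlo, show 2 * π + π / 4 = π / 4 + 2 * π by ring, Real.cos_add_two_pi,
      Real.cos_pi_div_four]
  have hsqrt2 : Real.sqrt 2 * Real.sqrt 2 = 2 := Real.mul_self_sqrt (by norm_num)
  have hsqrt2pos : 0 < Real.sqrt 2 := Real.sqrt_pos.mpr (by norm_num)
  have hsqrt2lt : Real.sqrt 2 < 1.5 := by
    nlinarith
  have ghi : 0 < g hi := by
    rw [hg]
    simp only [hsinhi, hcoshi]
    have h1 : 0 < Real.log (hi / 1) := by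
      apply Real.log_pos
      rw [hhi]; linarith
    simp only [mul_zero, zero_div]
    linarith
  have glo : g lo ≤ 0 := by
    rw [hg]
    simp only [hsinlo, hcoslo]
    have hlopos : (0:ℝ) < lo := by rw [hlo]; linarith
    have hs2 : Real.sqrt 2 / 2 ≠ 0 := by positivity
    have h1 : lo * (Real.sqrt 2 / 2) / (Real.sqrt 2 / 2) = lo :=
      mul_div_cancel_right₀ lo hs2
    rw [h1]
    have h2 : lo / (Real.sqrt 2 / 2) = lo * Real.sqrt 2 := by
      field_simp
      nlinarith
    rw [h2]
    have h3 : Real.log (lo * Real.sqrt 2) < 3 := by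
      rw [Real.log_lt_iff_lt_exp (by positivity)]
      have he : Real.exp 1 ^ (3:ℕ) = Real.exp 3 := by
        rw [← Real.exp_nat_mul]; norm_num
      have he1 : (2.7:ℝ) < Real.exp 1 := by
        have := Real.exp_one_gt_d9; linarith
      have : (19:ℝ) < Real.exp 1 ^ (3:ℕ) := by
        calc (19:ℝ) < 2.7 ^ (3:ℕ) := by norm_num
        _ < Real.exp 1 ^ (3:ℕ) := by
          apply pow_lt_pow_left₀ he1 (by norm_num)
          norm_num
      have hloup : lo < 7.1 := by rw [hlo]; linarith
      rw [he] at this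
      have h4 : lo * Real.sqrt 2 < 7.1 * 1.5 := by nlinarith
      calc lo * Real.sqrt 2 < 7.1 * 1.5 := h4
        _ < 19 := by norm_num
        _ < Real.exp 3 := this
    have hlo4 : (4:ℝ) ≤ lo := by rw [hlo]; linarith
    linarith
  -- intermediate value theorem
  have hmem : (0:ℝ) ∈ Set.Ico (g lo) (g hi) := ⟨glo, ghi⟩
  obtain ⟨b, hbmem, hgb⟩ := intermediate_value_Ico hlohi hcont hmem
  have hbIcc : b ∈ Set.Icc lo hi := ⟨hbmem.1, le_of_lt hbmem.2⟩
  have hsb : 0 < Real.sin b := hsinpos b hbIcc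
  have hb0 : 0 < b := hbpos b hbIcc
  have hb2pi : 2 * π < b := by
    have := hbmem.1; rw [hlo] at this; linarith
  refine ⟨Real.log (b / Real.sin b), b, ?_, hb2pi, hbmem.2, ?_, ?_⟩
  · apply Real.log_pos
    rw [lt_div_iff₀ hsb, one_mul]
    calc Real.sin b ≤ 1 := Real.sin_le_one b
      _ < b := by linarith
  · rw [Real.exp_log (div_pos hb0 hsb), div_mul_cancel₀ _ hsb.ne']
  · rw [Real.exp_log (div_pos hb0 hsb)]
    rw [hg] at hgb
    simp only at hgb
    have : b / Real.sin b * Real.cos b = b * Real.cos b / Real.sin b := by ring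
    rw [this]
    linarith
end

section
/- Let h : ℝ → ℝ be continuously differentiable with h'(x) = h(x) − h(x−1) for all x, and suppose h(x) → 0 as x → ∞. Then h(x) = ∫_{x−1}^x h(s) ds for all real x. -/
/-! With `q x = ∫_{x-1}^x h`, the fundamental theorem of calculus gives `q' x = h x - h (x - 1)`,
which is `h' x` by the delay equation. So `h - q` is constant, and it tends to `0` at `+∞`
because both `h` and its moving averages `q` do; hence `h = q`. -/

open Real Filter

open scoped Topology

section

variable {E : Type*} [NormedAddCommGroup E] [NormedSpace ℝ E]

theorem eq_of_hasDerivAt_of_tendsto_atTop {f g f' : ℝ → E} {l : E}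
    (hf : ∀ x, HasDerivAt f (f' x) x) (hg : ∀ x, HasDerivAt g (f' x) x)
    (hfl : Tendsto f atTop (𝓝 l)) (hgl : Tendsto g atTop (𝓝 l)) : f = g := by
  have hderiv : ∀ x, HasDerivAt (f - g) 0 x := fun x => by simpa using (hf x).sub (hg x)
  have hconst : ∀ x y, (f - g) x = (f - g) y := is_const_of_deriv_eq_zero
    (fun x => (hderiv x).differentiableAt) (fun x => (hderiv x).deriv)
  funext x
  have hlim : Tendsto (f - g) atTop (𝓝 ((f - g) x)) :=
    tendsto_const_nhds.congr (hconst x)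
  have hzero : (f - g) x = 0 :=
    tendsto_nhds_unique hlim (by rw [← sub_self l]; exact hfl.sub hgl)
  exact sub_eq_zero.mp hzero

theorem hasDerivAt_integral_sub_left [CompleteSpace E] {f : ℝ → E} (hf : Continuous f)
    (a y : ℝ) : HasDerivAt (fun x => ∫ s in (x - a)..x, f s) (f y - f (y - a)) y := by
  have hsplit : (fun x => ∫ s in (x - a)..x, f s) =
      fun x => (∫ s in (0 : ℝ)..x, f s) - ∫ s in (0 : ℝ)..(x - a), f s :=
    funext fun x => (intervalIntegral.integral_interval_sub_left
      (hf.intervalIntegrable _ _) (hf.intervalIntegrable _ _)).symm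
  rw [hsplit]
  exact (hf.integral_hasStrictDerivAt 0 y).hasDerivAt.sub
    ((hf.integral_hasStrictDerivAt 0 (y - a)).hasDerivAt.comp_sub_const y a)

theorem tendsto_integral_sub_left_atTop {f : ℝ → E} (hf : Tendsto f atTop (𝓝 0)) (a : ℝ) :
    Tendsto (fun x => ∫ s in (x - a)..x, f s) atTop (𝓝 0) := by
  rw [NormedAddGroup.tendsto_nhds_zero] at hf ⊢
  intro ε hε
  have hδ : 0 < ε / (|a| + 1) := by positivity
  obtain ⟨N, hN⟩ := eventually_atTop.mp (hf _ hδ)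
  refine eventually_atTop.mpr ⟨N + |a|, fun x hx => ?_⟩
  have hbound : ∀ s ∈ Set.uIoc (x - a) x, ‖f s‖ ≤ ε / (|a| + 1) := by
    intro s hs
    have hxs : x - |a| ≤ s := by
      rcases Set.mem_uIoc.mp hs with hs | hs <;> linarith [hs.1, le_abs_self a, neg_abs_le a]
    exact (hN s (by linarith)).le
  calc ‖∫ s in (x - a)..x, f s‖ ≤ ε / (|a| + 1) * |x - (x - a)| :=
        intervalIntegral.norm_integral_le_of_norm_le_const hbound
    _ = ε * (|a| / (|a| + 1)) := by rw [sub_sub_cancel]; ring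
    _ < ε := mul_lt_of_lt_one_right hε ((div_lt_one (by positivity)).mpr (lt_add_one _))

end

theorem stmt2 (h : ℝ → ℝ) (hC1 : ContDiff ℝ 1 h)
    (hder : ∀ x, deriv h x = h x - h (x - 1))
    (hlim : Tendsto h atTop (nhds 0)) (x : ℝ) :
    h x = ∫ s in (x - 1)..x, h s := by
  have hderiv : ∀ y, HasDerivAt h (h y - h (y - 1)) y := fun y =>
    hder y ▸ (hC1.differentiable one_ne_zero y).hasDerivAt
  exact congrFun (eq_of_hasDerivAt_of_tendsto_atTop hderiv
    (hasDerivAt_integral_sub_left hC1.continuous 1) hlim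
    (tendsto_integral_sub_left_atTop hlim 1)) x
end

section
/- There exist a > 0 and b > 2π such that the function f(x) = 1/2 + (1/2)·e^{−ax}·sin(bx) satisfies both f'(x) = f(x) − f(x−1) and f(x) = ∫_{x−1}^x f(s) ds for all real x. -/
/-!
If `μ = 1 - exp (-μ)`, then `exp (μ x)` satisfies both equations: its shift by `-1` is
`(1 - μ) exp (μ x)`, so `h x - h (x - 1) = μ h x = h' x`, and integrating `h'` over
`[x - 1, x]` gives `μ ∫ h = μ h x`. Both equations are preserved by continuous real-linear
maps (here the imaginary part) and by `h ↦ c + k h`. For `μ = -a + b i` the characteristic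
equation reads `exp a sin b = b`, `exp a cos b = 1 + a`; eliminating `a = log (b / sin b)`
leaves one equation in `b`, which has a root in `[9π/4, 5π/2]` by the intermediate value
theorem.
-/

open Real

def SolvesDelayEquations {E : Type*} [NormedAddCommGroup E] [NormedSpace ℝ E] (h : ℝ → E) :
    Prop :=
  ∀ x, HasDerivAt h (h x - h (x - 1)) x ∧ h x = ∫ s in (x - 1)..x, h s

namespace SolvesDelayEquations

variable {E F : Type*} [NormedAddCommGroup E] [NormedSpace ℝ E]
  [NormedAddCommGroup F] [NormedSpace ℝ F] {h : ℝ → E}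

theorem intervalIntegrable (hh : SolvesDelayEquations h) (a b : ℝ) :
    IntervalIntegrable h MeasureTheory.volume a b :=
  (continuous_iff_continuousAt.2 fun x => (hh x).1.continuousAt).intervalIntegrable a b

theorem clm_comp [CompleteSpace E] [CompleteSpace F] (hh : SolvesDelayEquations h)
    (L : E →L[ℝ] F) : SolvesDelayEquations (L ∘ h) := fun x => by
  refine ⟨by simpa using L.hasFDerivAt.comp_hasDerivAt x (hh x).1, ?_⟩
  rw [Function.comp_apply, (hh x).2, ← L.intervalIntegral_comp_comm (hh.intervalIntegrable _ _)]
  rfl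

theorem const_add_smul [CompleteSpace E] (hh : SolvesDelayEquations h) (c : E) (k : ℝ) :
    SolvesDelayEquations (fun x => c + k • h x) := fun x => by
  beta_reduce
  refine ⟨by simpa [smul_sub] using ((hh x).1.const_smul k).const_add c, ?_⟩
  have hint : IntervalIntegrable (fun s => k • h s) MeasureTheory.volume (x - 1) x :=
    (hh.intervalIntegrable _ _).smul k
  rw [intervalIntegral.integral_add intervalIntegrable_const hint, intervalIntegral.integral_smul,
    ← (hh x).2]
  simp

end SolvesDelayEquations

open Complex in
theorem solvesDelayEquations_cexp_mul {μ : ℂ} (hμ : μ = 1 - exp (-μ)) :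
    SolvesDelayEquations (fun x : ℝ => exp (μ * x)) := by
  have hshift : ∀ x : ℝ, exp (μ * ↑(x - 1)) = (1 - μ) * exp (μ * x) := fun x => by
    rw [ofReal_sub, ofReal_one, mul_sub, mul_one, sub_eq_add_neg, Complex.exp_add]
    linear_combination exp (μ * x) * hμ
  intro x
  constructor
  · have hd : HasDerivAt (fun y : ℝ => exp (μ * y)) (exp (μ * x) * μ) x := by
      simpa using ((hasDerivAt_id (x : ℂ)).const_mul μ).cexp.comp_ofReal
    exact hd.congr_deriv (by beta_reduce; rw [hshift]; ring)
  · rcases eq_or_ne μ 0 with rfl | hμ0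
    · simp
    · rw [integral_exp_mul_complex hμ0, hshift]
      field_simp
      ring

theorem sin_pos_of_mem_Ioo_two_pi_three_pi {b : ℝ} (hb : b ∈ Set.Ioo (2 * π) (3 * π)) :
    0 < sin b := by
  rw [← sin_sub_two_pi]
  exact sin_pos_of_pos_of_lt_pi (by linarith [hb.1]) (by linarith [hb.2])

theorem exists_mul_cos_eq_one_add_log_mul_sin :
    ∃ b ∈ Set.Icc (9 * π / 4) (5 * π / 2), b * cos b = (1 + log (b / sin b)) * sin b := by
  have hsin : ∀ b ∈ Set.Icc (9 * π / 4) (5 * π / 2), 0 < sin b := fun b hb =>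
    sin_pos_of_mem_Ioo_two_pi_three_pi ⟨by linarith [hb.1, pi_pos], by linarith [hb.2, pi_pos]⟩
  have hquot : ContinuousOn (fun b => log (b / sin b)) (Set.Icc (9 * π / 4) (5 * π / 2)) :=
    (continuousOn_id.div continuous_sin.continuousOn fun b hb => (hsin b hb).ne').log
      fun b hb => (div_pos (show 0 < b by linarith [hb.1, pi_pos]) (hsin b hb)).ne'
  have hcont : ContinuousOn (fun b => b * cos b - (1 + log (b / sin b)) * sin b)
      (Set.Icc (9 * π / 4) (5 * π / 2)) := by
    fun_prop
  have hright : 5 * π / 2 * cos (5 * π / 2) - (1 + log (5 * π / 2 / sin (5 * π / 2))) *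
      sin (5 * π / 2) ≤ 0 := by
    have hs : sin (5 * π / 2) = 1 := by
      rw [show 5 * π / 2 = π / 2 + 2 * π by ring, sin_add_two_pi, sin_pi_div_two]
    have hc : cos (5 * π / 2) = 0 := by
      rw [show 5 * π / 2 = π / 2 + 2 * π by ring, cos_add_two_pi, cos_pi_div_two]
    have : 0 ≤ log (5 * π / 2) := log_nonneg (by linarith [pi_gt_three])
    rw [hs, hc, div_one]
    linarith
  have hleft : 0 ≤ 9 * π / 4 * cos (9 * π / 4) - (1 + log (9 * π / 4 / sin (9 * π / 4))) *
      sin (9 * π / 4) := by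
    have hs : sin (9 * π / 4) = √2 / 2 := by
      rw [show 9 * π / 4 = π / 4 + 2 * π by ring, sin_add_two_pi, sin_pi_div_four]
    have hc : cos (9 * π / 4) = √2 / 2 := by
      rw [show 9 * π / 4 = π / 4 + 2 * π by ring, cos_add_two_pi, cos_pi_div_four]
    have hsqrt : 1 < √2 := by rw [lt_sqrt zero_le_one]; norm_num
    have hlog : log (9 * π / 4 / (√2 / 2)) ≤ 4 * log 2 := calc
      _ ≤ log (2 ^ 4) := by
        refine log_le_log (by positivity) ?_
        rw [div_le_iff₀ (by positivity)]
        norm_num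
        linarith [pi_lt_d2]
      _ = 4 * log 2 := by rw [log_pow]; norm_num
    rw [hs, hc]
    nlinarith [log_two_lt_d9, pi_gt_three]
  obtain ⟨b, hb, hb0⟩ := intermediate_value_Icc' (by linarith [pi_pos]) hcont ⟨hright, hleft⟩
  exact ⟨b, hb, sub_eq_zero.1 hb0⟩

theorem exists_exp_mul_sin_eq_self_and_exp_mul_cos_eq_one_add :
    ∃ a b : ℝ, 0 < a ∧ 2 * π < b ∧ exp a * sin b = b ∧ exp a * cos b = 1 + a := by
  obtain ⟨b, hb, hbal⟩ := exists_mul_cos_eq_one_add_log_mul_sin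
  have hsin : 0 < sin b :=
    sin_pos_of_mem_Ioo_two_pi_three_pi ⟨by linarith [hb.1, pi_pos], by linarith [hb.2, pi_pos]⟩
  have hratio : 1 < b / sin b := by
    rw [one_lt_div hsin]
    linarith [sin_le_one b, hb.1, pi_gt_three]
  have hexp : exp (log (b / sin b)) = b / sin b := exp_log (by linarith)
  refine ⟨log (b / sin b), b, log_pos hratio, by linarith [hb.1, pi_pos], ?_, ?_⟩
  · rw [hexp, div_mul_cancel₀ _ hsin.ne']
  · rw [hexp, div_mul_eq_mul_div, hbal, mul_div_cancel_right₀ _ hsin.ne']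

open Complex in
theorem neg_add_mul_I_eq_one_sub_cexp {a b : ℝ} (hs : Real.exp a * Real.sin b = b)
    (hc : Real.exp a * Real.cos b = 1 + a) : (-a + b * I : ℂ) = 1 - exp (-(-a + b * I)) := by
  apply Complex.ext <;> simp [Complex.exp_re, Complex.exp_im, hs, hc]

open Complex in
theorem cexp_neg_add_mul_I_mul_im (a b x : ℝ) :
    (exp ((-a + b * I) * x)).im = Real.exp (-a * x) * Real.sin (b * x) := by
  simp [Complex.exp_im]

theorem stmt3 :
    ∃ a b : ℝ, 0 < a ∧ 2 * π < b ∧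
      ∀ f : ℝ → ℝ, (∀ x, f x = 1 / 2 + 1 / 2 * Real.exp (-a * x) * Real.sin (b * x)) →
        ∀ x : ℝ, HasDerivAt f (f x - f (x - 1)) x ∧ f x = ∫ s in (x - 1)..x, f s := by
  obtain ⟨a, b, ha, hb, hs, hc⟩ := exists_exp_mul_sin_eq_self_and_exp_mul_cos_eq_one_add
  refine ⟨a, b, ha, hb, fun f hf => ?_⟩
  have hfun : f = fun x => 1 / 2 + (1 / 2 : ℝ) •
      (Complex.imCLM ∘ fun x : ℝ => Complex.exp ((-a + b * Complex.I) * x)) x := by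
    ext x
    simp [hf, cexp_neg_add_mul_I_mul_im, mul_assoc]
  rw [hfun]
  exact ((solvesDelayEquations_cexp_mul (neg_add_mul_I_eq_one_sub_cexp hs hc)).clm_comp
    Complex.imCLM).const_add_smul _ _
end

section
/- For all real β, γ with 0 ≤ β ≤ γ ≤ 1, (e^β − 1)·e^{γ−β}·(e^{γ−β} − 1)·e^{2(1−γ)} ≤ ((e−1)/2)², with equality when γ = 1 and β = log(2e/(e+1)). -/
open Real

theorem stmt16 :
    (∀ β γ : ℝ, 0 ≤ β → β ≤ γ → γ ≤ 1 →
      (Real.exp β - 1) * Real.exp (γ - β) * (Real.exp (γ - β) - 1) *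
        Real.exp (2 * (1 - γ)) ≤ ((Real.exp 1 - 1) / 2) ^ 2) ∧
    (Real.exp (Real.log (2 * Real.exp 1 / (Real.exp 1 + 1))) - 1) *
        Real.exp (1 - Real.log (2 * Real.exp 1 / (Real.exp 1 + 1))) *
        (Real.exp (1 - Real.log (2 * Real.exp 1 / (Real.exp 1 + 1))) - 1) *
        Real.exp (2 * (1 - 1)) = ((Real.exp 1 - 1) / 2) ^ 2 := by
  constructor
  · intro β γ hβ hβγ hγ
    set A := Real.exp β with hA
    set B := Real.exp γ with hB
    set E := Real.exp 1 with hE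
    have hApos : 0 < A := Real.exp_pos β
    have hBpos : 0 < B := Real.exp_pos γ
    have hA1 : 1 ≤ A := by
      rw [hA, ← Real.exp_zero]; exact Real.exp_le_exp.mpr hβ
    have hAB : A ≤ B := Real.exp_le_exp.mpr hβγ
    have hBE : B ≤ E := Real.exp_le_exp.mpr hγ
    have h1 : Real.exp (γ - β) = B / A := Real.exp_sub γ β
    have h2 : Real.exp (2 * (1 - γ)) = (E / B) ^ 2 := by
      rw [two_mul, Real.exp_add, ← Real.exp_sub, sq]
    rw [h1, h2]
    have hLHS : (A - 1) * (B / A) * (B / A - 1) * (E / B) ^ 2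
        = E ^ 2 * ((A - 1) * (B - A)) / (A ^ 2 * B) := by
      field_simp
    rw [hLHS, div_le_iff₀ (by positivity)]
    nlinarith [mul_nonneg hBpos.le (sq_nonneg ((E + 1) * A - 2 * E)),
      mul_nonneg (mul_nonneg (mul_nonneg (Real.exp_pos 1).le (sub_nonneg.mpr hA1))
        hApos.le) (sub_nonneg.mpr hBE), sq_nonneg (E - 1), Real.exp_pos 1]
  · have hE : (0:ℝ) < Real.exp 1 := Real.exp_pos 1
    have hE1 : (0:ℝ) < Real.exp 1 + 1 := by linarith
    have hpos : 0 < 2 * Real.exp 1 / (Real.exp 1 + 1) := by positivity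
    have h1 : Real.exp (Real.log (2 * Real.exp 1 / (Real.exp 1 + 1)))
        = 2 * Real.exp 1 / (Real.exp 1 + 1) := Real.exp_log hpos
    have h2 : Real.exp (1 - Real.log (2 * Real.exp 1 / (Real.exp 1 + 1)))
        = (Real.exp 1 + 1) / 2 := by
      rw [Real.exp_sub, h1]
      field_simp
    rw [h1, h2]
    norm_num
    field_simp
    ring
end

section
/- For integers n ≥ 1 and 1 ≤ i ≤ j ≤ n, ((1 + 1/n)^{i−1} − 1) · ((1 + 2/n)^{j−i} − (1 + 1/n)^{j−i}) · (1 + 2/n)^{n−j+1} ≤ (e^β − 1)·e^{γ−β}·(e^{γ−β} − 1)·e^{2(1−γ)}·(1 + 2/n), where β = i/n and γ = j/n. -/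
/-!
Write `x = 1/n`. Both `(1 + x)^m ≤ e^{m x}` and `(1 + 2x)^m ≤ e^{2 m x}` follow from
`1 + t ≤ e^t`, which handles the first and last factor. For the middle one,
`1 + 2x ≤ (1 + x)^2` gives `(1 + 2x)^m - (1 + x)^m ≤ A (A - 1)` with `A = (1 + x)^m`, and
`A ↦ A (A - 1)` is monotone on `[1, ∞)`, so `A ≤ e^{m x}` bounds it by `e^{m x} (e^{m x} - 1)`.
-/

open Real

theorem one_add_pow_le_exp_mul {x : ℝ} (hx : -1 ≤ x) (m : ℕ) :
    (1 + x) ^ m ≤ exp (m * x) := by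
  calc (1 + x) ^ m ≤ exp x ^ m := by
        gcongr
        · linarith
        · linarith [add_one_le_exp x]
    _ = exp (m * x) := (exp_nat_mul x m).symm

theorem one_add_pow_le_one_add_two_mul_pow {x : ℝ} (hx : 0 ≤ x) (m : ℕ) :
    (1 + x) ^ m ≤ (1 + 2 * x) ^ m := by
  gcongr
  linarith

theorem one_add_two_mul_pow_sub_one_add_pow_le {x : ℝ} (hx : 0 ≤ x) (m : ℕ) :
    (1 + 2 * x) ^ m - (1 + x) ^ m ≤ exp (m * x) * (exp (m * x) - 1) := by
  set A := (1 + x) ^ m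
  have hA : 1 ≤ A := one_le_pow₀ (by linarith)
  have hAE : A ≤ exp (m * x) := one_add_pow_le_exp_mul (by linarith) m
  have hsq : (1 + 2 * x) ^ m ≤ A ^ 2 := by
    calc (1 + 2 * x) ^ m ≤ ((1 + x) ^ 2) ^ m := by gcongr; nlinarith
      _ = A ^ 2 := by rw [← pow_mul, ← pow_mul, mul_comm]
  nlinarith

theorem one_add_pow_product_le_exp_product {x α γ : ℝ} (hx : 0 ≤ x) {p q r : ℕ}
    (hp : p * x ≤ α) (hr : 2 * (r * x) ≤ γ) :
    ((1 + x) ^ p - 1) * ((1 + 2 * x) ^ q - (1 + x) ^ q) * (1 + 2 * x) ^ (r + 1) ≤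
      (exp α - 1) * exp (q * x) * (exp (q * x) - 1) * exp γ * (1 + 2 * x) := by
  have first : (1 + x) ^ p - 1 ≤ exp α - 1 :=
    sub_le_sub_right ((one_add_pow_le_exp_mul (by linarith) p).trans (exp_le_exp.2 hp)) 1
  have first_nonneg : 0 ≤ (1 + x) ^ p - 1 := sub_nonneg.2 (one_le_pow₀ (by linarith))
  have middle := one_add_two_mul_pow_sub_one_add_pow_le hx q
  have middle_nonneg := sub_nonneg.2 (one_add_pow_le_one_add_two_mul_pow hx q)
  have last : (1 + 2 * x) ^ r ≤ exp γ := by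
    refine (one_add_pow_le_exp_mul (by linarith) r).trans (exp_le_exp.2 ?_)
    linarith
  calc _ = ((1 + x) ^ p - 1) * ((1 + 2 * x) ^ q - (1 + x) ^ q) *
        ((1 + 2 * x) ^ r * (1 + 2 * x)) := by rw [pow_succ]
    _ ≤ (exp α - 1) * (exp (q * x) * (exp (q * x) - 1)) * (exp γ * (1 + 2 * x)) :=
        mul_le_mul (mul_le_mul first middle middle_nonneg (first_nonneg.trans first))
          (by gcongr) (by positivity)
          (mul_nonneg (first_nonneg.trans first) (middle_nonneg.trans middle))
    _ = _ := by ring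

theorem stmt17_general (n i j : ℕ) (hij : i ≤ j) (hjn : j ≤ n) :
    (((1 : ℝ) + 1 / n) ^ (i - 1) - 1) *
        (((1 : ℝ) + 2 / n) ^ (j - i) - ((1 : ℝ) + 1 / n) ^ (j - i)) *
        ((1 : ℝ) + 2 / n) ^ (n - j + 1)
      ≤ (Real.exp ((i : ℝ) / n) - 1) * Real.exp ((j : ℝ) / n - (i : ℝ) / n) *
        (Real.exp ((j : ℝ) / n - (i : ℝ) / n) - 1) *
        Real.exp (2 * (1 - (j : ℝ) / n)) * (1 + 2 / n) := by
  have hp : ((i - 1 : ℕ) : ℝ) * (1 / n) ≤ i / n := by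
    rw [mul_one_div]
    gcongr
    exact_mod_cast Nat.sub_le i 1
  have hq : (j : ℝ) / n - i / n = ((j - i : ℕ) : ℝ) * (1 / n) := by
    rw [Nat.cast_sub hij]
    ring
  -- `n / n ≤ 1` rather than `= 1`, so that `n = 0` needs no separate treatment
  have hr : 2 * (((n - j : ℕ) : ℝ) * (1 / n)) ≤ 2 * (1 - j / n) := by
    have : (n : ℝ) / n ≤ 1 := div_self_le_one _
    rw [Nat.cast_sub hjn, sub_mul, mul_one_div, mul_one_div]
    gcongr
  rw [hq, show (2 : ℝ) / n = 2 * (1 / n) by ring]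
  exact one_add_pow_product_le_exp_product (by positivity) hp hr

theorem stmt17 (n i j : ℕ) (hn : 1 ≤ n) (hi : 1 ≤ i) (hij : i ≤ j) (hjn : j ≤ n) :
    (((1 : ℝ) + 1 / n) ^ (i - 1) - 1) *
        (((1 : ℝ) + 2 / n) ^ (j - i) - ((1 : ℝ) + 1 / n) ^ (j - i)) *
        ((1 : ℝ) + 2 / n) ^ (n - j + 1)
      ≤ (Real.exp ((i : ℝ) / n) - 1) * Real.exp ((j : ℝ) / n - (i : ℝ) / n) *
        (Real.exp ((j : ℝ) / n - (i : ℝ) / n) - 1) *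
        Real.exp (2 * (1 - (j : ℝ) / n)) * (1 + 2 / n) :=
  stmt17_general n i j hij hjn
end
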